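/- arXiv:1403.0431 — 3 statements merged into one kernel-verified Lean document; each statement's English description precedes it below -/
import Mathlib

section
/- Let (ξ_n)_{n≥1} be an i.i.d. sequence of strictly positive random variables with partial sums S_n = ξ_1 + ⋯ + ξ_n (S_0 = 0), and let N be a geometric random variable with parameter 1−ρ ∈ (0,1) (i.e., ℙ(N = n) = (1−ρ)ρ^n for n = 0,1,2,…), independent of (ξ_n). Similarly, let (η_n)_{n≥1} be an i.i.d. sequence of strictly positive random variables with partial sums T_n = η_1 + ⋯ + η_n (T_0 = 0), and let M be a geometric random variable with parameter 1−ϱ ∈ (0,1), independent of (η_n). If S_N and T_M have the same distribution, then ρ = ϱ and ξ_1 and η_1 have the same distribution. -/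
open MeasureTheory ProbabilityTheory Filter Set Topology
open scoped ENNReal NNReal

namespace Statement8Aux

variable {Ω : Type*} [MeasurableSpace Ω] {P : Measure Ω} [IsProbabilityMeasure P]

lemma measurable_randomSum {ξ : ℕ → Ω → ℝ} {N : Ω → ℕ}
    (hξmeas : ∀ n, Measurable (ξ n)) (hNmeas : Measurable N) :
    Measurable fun ω => ∑ i ∈ Finset.range (N ω), ξ i ω := by
  have h1 : Measurable fun p : Ω × ℕ => ∑ i ∈ Finset.range p.2, ξ i p.1 := by
    apply measurable_from_prod_countable_left
    intro n
    simp only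
    exact Finset.measurable_sum _ fun i _ => hξmeas i
  exact h1.comp (measurable_id.prodMk hNmeas)

lemma measurable_partialSum {ξ : ℕ → Ω → ℝ} (hξmeas : ∀ n, Measurable (ξ n)) (n : ℕ) :
    Measurable fun ω => ∑ i ∈ Finset.range n, ξ i ω :=
  Finset.measurable_sum _ fun i _ => hξmeas i

lemma cdf_monotone {ξ : ℕ → Ω → ℝ} (n : ℕ) :
    Monotone fun y => P {ω | ∑ i ∈ Finset.range n, ξ i ω ≤ y} := fun y z hyz =>
  measure_mono fun ω hω => le_trans hω hyz

/-- Decomposition of the law of the random sum at `Iic x`. -/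
lemma map_randomSum_Iic {ξ : ℕ → Ω → ℝ} {N : Ω → ℕ} {ρ : ℝ}
    (hρ : 0 < ρ) (hρ1 : ρ < 1)
    (hξmeas : ∀ n, Measurable (ξ n)) (hNmeas : Measurable N)
    (hN : ∀ n : ℕ, P {ω | N ω = n} = ENNReal.ofReal ((1 - ρ) * ρ ^ n))
    (hNind : IndepFun N (fun ω => fun n => ξ n ω) P) (x : ℝ) :
    Measure.map (fun ω => ∑ i ∈ Finset.range (N ω), ξ i ω) P (Iic x)
      = ENNReal.ofReal (1 - ρ) *
        ∑' n, ENNReal.ofReal ρ ^ n * P {ω | ∑ i ∈ Finset.range n, ξ i ω ≤ x} := by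
  rw [Measure.map_apply (measurable_randomSum hξmeas hNmeas) measurableSet_Iic]
  have hdec : (fun ω => ∑ i ∈ Finset.range (N ω), ξ i ω) ⁻¹' (Iic x)
      = ⋃ n, (N ⁻¹' {n} ∩ {ω | ∑ i ∈ Finset.range n, ξ i ω ≤ x}) := by
    ext ω
    simp only [mem_preimage, mem_Iic, mem_iUnion, mem_inter_iff, mem_singleton_iff,
      mem_setOf_eq]
    exact ⟨fun h => ⟨N ω, rfl, h⟩, by rintro ⟨n, rfl, h⟩; exact h⟩
  rw [hdec, measure_iUnion]
  · rw [← ENNReal.tsum_mul_left]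
    refine tsum_congr fun n => ?_
    have hT : MeasurableSet {v : ℕ → ℝ | ∑ i ∈ Finset.range n, v i ≤ x} := by
      have : Measurable fun v : ℕ → ℝ => ∑ i ∈ Finset.range n, v i :=
        Finset.measurable_sum _ fun i _ => measurable_pi_apply i
      exact this measurableSet_Iic
    have hpre : {ω | ∑ i ∈ Finset.range n, ξ i ω ≤ x}
        = (fun ω => fun k => ξ k ω) ⁻¹' {v : ℕ → ℝ | ∑ i ∈ Finset.range n, v i ≤ x} := rfl
    rw [hpre, hNind.measure_inter_preimage_eq_mul _ _ (measurableSet_singleton n) hT]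
    have hNn : N ⁻¹' {n} = {ω | N ω = n} := rfl
    rw [hNn, hN n, ENNReal.ofReal_mul (by linarith), ENNReal.ofReal_pow hρ.le, mul_assoc]
  · intro m n hmn
    exact Disjoint.mono inter_subset_left inter_subset_left
      (Disjoint.preimage N (by simpa using hmn))
  · intro n
    exact ((hNmeas (measurableSet_singleton n)).inter
      ((measurable_partialSum hξmeas n) measurableSet_Iic))

/-- One-step recursion for the partial-sum CDFs. -/
lemma cdf_succ {ξ : ℕ → Ω → ℝ}
    (hξmeas : ∀ n, Measurable (ξ n))
    (hξiid : iIndepFun ξ P)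
    (hξid : ∀ n, Measure.map (ξ n) P = Measure.map (ξ 0) P) (n : ℕ) (y : ℝ) :
    P {ω | ∑ i ∈ Finset.range (n + 1), ξ i ω ≤ y}
      = ∫⁻ t, P {ω | ∑ i ∈ Finset.range n, ξ i ω ≤ y - t} ∂(Measure.map (ξ 0) P) := by
  have hS : Measurable fun ω => ∑ i ∈ Finset.range n, ξ i ω := measurable_partialSum hξmeas n
  have hind : IndepFun (fun ω => ∑ i ∈ Finset.range n, ξ i ω) (ξ n) P := by
    have h := hξiid.indepFun_finsetSum_of_notMem hξmeas
      (s := Finset.range n) (i := n) (by simp)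
    have heq : (∑ i ∈ Finset.range n, ξ i) = fun ω => ∑ i ∈ Finset.range n, ξ i ω := by
      funext ω; simp [Finset.sum_apply]
    rwa [heq] at h
  have hset : MeasurableSet {p : ℝ × ℝ | p.1 + p.2 ≤ y} :=
    (measurable_fst.add measurable_snd) measurableSet_Iic
  have hmap : P.map (fun ω => (∑ i ∈ Finset.range n, ξ i ω, ξ n ω))
      = (P.map (fun ω => ∑ i ∈ Finset.range n, ξ i ω)).prod (P.map (ξ n)) :=
    (indepFun_iff_map_prod_eq_prod_map_map hS.aemeasurable (hξmeas n).aemeasurable).1 hind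
  have h1 : P {ω | ∑ i ∈ Finset.range (n + 1), ξ i ω ≤ y}
      = P.map (fun ω => (∑ i ∈ Finset.range n, ξ i ω, ξ n ω)) {p : ℝ × ℝ | p.1 + p.2 ≤ y} := by
    rw [Measure.map_apply (hS.prodMk (hξmeas n)) hset]
    congr 1
    ext ω
    simp [Finset.sum_range_succ]
  rw [h1, hmap, Measure.prod_apply_symm hset, hξid n]
  refine lintegral_congr fun t => ?_
  have hpre : ((fun a => (a, t)) ⁻¹' {p : ℝ × ℝ | p.1 + p.2 ≤ y}) = Iic (y - t) := by
    ext a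
    simp [le_sub_iff_add_le]
  rw [hpre, Measure.map_apply hS measurableSet_Iic]
  rfl

/-- Renewal-type functional equation for `H`. -/
lemma H_rec {ξ : ℕ → Ω → ℝ}
    (hξmeas : ∀ n, Measurable (ξ n))
    (hξiid : iIndepFun ξ P)
    (hξid : ∀ n, Measure.map (ξ n) P = Measure.map (ξ 0) P) (r : ℝ≥0∞) (x : ℝ) :
    (∑' n, r ^ n * P {ω | ∑ i ∈ Finset.range n, ξ i ω ≤ x})
      = P {ω | (0:ℝ) ≤ x} + r * ∫⁻ t,
          (∑' n, r ^ n * P {ω | ∑ i ∈ Finset.range n, ξ i ω ≤ x - t})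
            ∂(Measure.map (ξ 0) P) := by
  have hAmeas : ∀ n, Measurable fun y => P {ω | ∑ i ∈ Finset.range n, ξ i ω ≤ y} :=
    fun n => (cdf_monotone n).measurable
  rw [tsum_eq_zero_add' ENNReal.summable]
  have h0 : r ^ 0 * P {ω | ∑ i ∈ Finset.range 0, ξ i ω ≤ x} = P {ω | (0:ℝ) ≤ x} := by
    simp
  rw [h0]
  congr 1
  calc (∑' n, r ^ (n + 1) * P {ω | ∑ i ∈ Finset.range (n + 1), ξ i ω ≤ x})
      = ∑' n, r * (r ^ n * ∫⁻ t, P {ω | ∑ i ∈ Finset.range n, ξ i ω ≤ x - t}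
          ∂(Measure.map (ξ 0) P)) := by
        refine tsum_congr fun n => ?_
        rw [cdf_succ hξmeas hξiid hξid n x, pow_succ, mul_comm (r ^ n) r, mul_assoc]
    _ = r * ∑' n, ∫⁻ t, r ^ n * P {ω | ∑ i ∈ Finset.range n, ξ i ω ≤ x - t}
          ∂(Measure.map (ξ 0) P) := by
        rw [ENNReal.tsum_mul_left]
        congr 1
        refine tsum_congr fun n => ?_
        exact (lintegral_const_mul _
          ((hAmeas n).comp (measurable_const.sub measurable_id))).symm
    _ = r * ∫⁻ t, (∑' n, r ^ n * P {ω | ∑ i ∈ Finset.range n, ξ i ω ≤ x - t})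
          ∂(Measure.map (ξ 0) P) := by
        congr 1
        exact (lintegral_tsum fun n =>
          (((hAmeas n).comp (measurable_const.sub measurable_id)).const_mul _).aemeasurable).symm

end Statement8Aux

open Statement8Aux

/-- If a geometric random sum `S_N` of i.i.d. strictly positive random
variables (with `N` geometric of parameter `1-ρ` independent of the summands) has the same
distribution as another such geometric random sum `T_M` (parameter `1-ϱ`), then `ρ = ϱ` and
the summands have the same distribution. -/
theorem statement8 {Ω : Type*} [MeasurableSpace Ω] (P : Measure Ω) [IsProbabilityMeasure P]
    (ξ η : ℕ → Ω → ℝ) (N M : Ω → ℕ) (ρ ϱ : ℝ)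
    (hρ : 0 < ρ) (hρ1 : ρ < 1) (hϱ : 0 < ϱ) (hϱ1 : ϱ < 1)
    (hξmeas : ∀ n, Measurable (ξ n)) (hηmeas : ∀ n, Measurable (η n))
    (hNmeas : Measurable N) (hMmeas : Measurable M)
    (hξpos : ∀ n ω, 0 < ξ n ω) (hηpos : ∀ n ω, 0 < η n ω)
    (hξiid : iIndepFun ξ P)
    (hξid : ∀ n, Measure.map (ξ n) P = Measure.map (ξ 0) P)
    (hηiid : iIndepFun η P)
    (hηid : ∀ n, Measure.map (η n) P = Measure.map (η 0) P)
    (hN : ∀ n : ℕ, P {ω | N ω = n} = ENNReal.ofReal ((1 - ρ) * ρ ^ n))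
    (hM : ∀ n : ℕ, P {ω | M ω = n} = ENNReal.ofReal ((1 - ϱ) * ϱ ^ n))
    (hNind : IndepFun N (fun ω => fun n => ξ n ω) P)
    (hMind : IndepFun M (fun ω => fun n => η n ω) P)
    (hdist : Measure.map (fun ω => ∑ i ∈ Finset.range (N ω), ξ i ω) P
      = Measure.map (fun ω => ∑ i ∈ Finset.range (M ω), η i ω) P) :
    ρ = ϱ ∧ Measure.map (ξ 0) P = Measure.map (η 0) P := by
  have hSN : Measurable fun ω => ∑ i ∈ Finset.range (N ω), ξ i ω :=
    measurable_randomSum hξmeas hNmeas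
  have hTM : Measurable fun ω => ∑ i ∈ Finset.range (M ω), η i ω :=
    measurable_randomSum hηmeas hMmeas
  -- Step 1 : ρ = ϱ
  have hzero : ∀ (ζ : ℕ → Ω → ℝ) (K : Ω → ℕ), (∀ n ω, 0 < ζ n ω) →
      (fun ω => ∑ i ∈ Finset.range (K ω), ζ i ω) ⁻¹' ({0} : Set ℝ) = {ω | K ω = 0} := by
    intro ζ K hpos
    ext ω
    simp only [mem_preimage, mem_singleton_iff, mem_setOf_eq]
    constructor
    · intro h
      by_contra hne
      have hpos' : 0 < ∑ i ∈ Finset.range (K ω), ζ i ω :=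
        Finset.sum_pos (fun i _ => hpos i ω) (by simpa [Finset.nonempty_range_iff] using hne)
      linarith
    · intro h; simp [h]
  have hρϱ : ρ = ϱ := by
    have h := congrArg (fun m : Measure ℝ => m ({0} : Set ℝ)) hdist
    beta_reduce at h
    rw [Measure.map_apply hSN (measurableSet_singleton 0),
      Measure.map_apply hTM (measurableSet_singleton 0),
      hzero ξ N hξpos, hzero η M hηpos, hN 0, hM 0] at h
    simp only [pow_zero, mul_one] at h
    have := (ENNReal.ofReal_eq_ofReal_iff (by linarith) (by linarith)).1 h
    linarith
  refine ⟨hρϱ, ?_⟩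
  subst hρϱ
  -- Step 2
  set μ := Measure.map (ξ 0) P with hμdef
  set ν := Measure.map (η 0) P with hνdef
  haveI : IsProbabilityMeasure μ := Measure.isProbabilityMeasure_map (hξmeas 0).aemeasurable
  haveI : IsProbabilityMeasure ν := Measure.isProbabilityMeasure_map (hηmeas 0).aemeasurable
  set r := ENNReal.ofReal ρ with hrdef
  have hr0 : r ≠ 0 := (ENNReal.ofReal_pos.2 hρ).ne'
  have hrtop : r ≠ ∞ := ENNReal.ofReal_ne_top
  have hr1 : r < 1 := by
    rw [hrdef]
    exact ENNReal.ofReal_lt_one.2 hρ1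
  have hgeom : (1 - r)⁻¹ ≠ ∞ := by
    rw [ENNReal.inv_ne_top]
    exact (tsub_pos_of_lt hr1).ne'
  set A : ℕ → ℝ → ℝ≥0∞ := fun n y => P {ω | ∑ i ∈ Finset.range n, ξ i ω ≤ y} with hAdef
  set B : ℕ → ℝ → ℝ≥0∞ := fun n y => P {ω | ∑ i ∈ Finset.range n, η i ω ≤ y} with hBdef
  set H : ℝ → ℝ≥0∞ := fun y => ∑' n, r ^ n * A n y with hHdef
  -- the two mixtures agree
  have hHeq : ∀ y, H y = ∑' n, r ^ n * B n y := by
    intro y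
    have h1 := map_randomSum_Iic (P := P) hρ hρ1 hξmeas hNmeas hN hNind y
    have h2 := map_randomSum_Iic (P := P) hρ hρ1 hηmeas hMmeas hM hMind y
    rw [hdist] at h1
    have h3 := h1.symm.trans h2
    exact (ENNReal.mul_right_inj (ENNReal.ofReal_pos.2 (by linarith)).ne'
      ENNReal.ofReal_ne_top).1 h3
  have hHB : H = fun y => ∑' n, r ^ n * B n y := funext hHeq
  -- functional equations
  have hrecξ : ∀ y, H y = P {ω | (0:ℝ) ≤ y} + r * ∫⁻ t, H (y - t) ∂μ := by
    intro y
    exact H_rec hξmeas hξiid hξid r y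
  have hrecη : ∀ y, H y = P {ω | (0:ℝ) ≤ y} + r * ∫⁻ t, H (y - t) ∂ν := by
    intro y
    rw [hHB]
    exact H_rec hηmeas hηiid hηid r y
  -- bounds and measurability
  have hHle : ∀ y, H y ≤ (1 - r)⁻¹ := by
    intro y
    rw [hHdef]
    refine le_trans (ENNReal.tsum_le_tsum fun n => ?_) (le_of_eq (ENNReal.tsum_geometric r))
    calc r ^ n * A n y ≤ r ^ n * 1 := mul_le_mul_right prob_le_one _
      _ = r ^ n := mul_one _
  have hHmeas : Measurable H := by
    rw [hHdef]
    exact Measurable.ennreal_tsum fun n => ((cdf_monotone n).measurable).const_mul _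
  -- cancellation : the two convolutions agree
  have hK : ∀ y, ∫⁻ t, H (y - t) ∂μ = ∫⁻ t, H (y - t) ∂ν := by
    intro y
    have h := (hrecξ y).symm.trans (hrecη y)
    have h2 := (ENNReal.add_right_inj (measure_ne_top P _)).1 h
    exact (ENNReal.mul_right_inj hr0 hrtop).1 h2
  -- conclusion by comparing the CDFs
  refine Measure.ext_of_Iic μ ν fun x => ?_
  have he : ∀ (m : Measure ℝ), IsProbabilityMeasure m →
      ∫⁻ t, P {ω | (0:ℝ) ≤ x - t} ∂m = m (Iic x) := by
    intro m _
    have heq : (fun t => P {ω | (0:ℝ) ≤ x - t}) = (Iic x).indicator 1 := by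
      funext t
      by_cases h : t ≤ x
      · have h2 : {ω : Ω | (0:ℝ) ≤ x - t} = univ := eq_univ_of_forall fun ω => by
          simp only [mem_setOf_eq, sub_nonneg]
          exact h
        simp [h2, h]
      · have h2 : {ω : Ω | (0:ℝ) ≤ x - t} = ∅ := eq_empty_iff_forall_notMem.2 fun ω hω => by
          simp only [mem_setOf_eq, sub_nonneg] at hω
          exact h hω
        simp [h2, h]
    rw [heq, lintegral_indicator_one measurableSet_Iic]
  have hmeasH2 : AEMeasurable (Function.uncurry fun t s => H (x - t - s)) (μ.prod ν) := by
    have hm : Measurable fun p : ℝ × ℝ => H (x - p.1 - p.2) :=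
      hHmeas.comp ((measurable_const.sub measurable_fst).sub measurable_snd)
    exact hm.aemeasurable
  have hinner : ∀ (m : Measure ℝ), Measurable fun t => ∫⁻ s, H (x - t - s) ∂m := by
    intro m
    have hmonoH : Monotone H := by
      rw [hHdef]
      intro a b hab
      exact ENNReal.tsum_le_tsum fun n => mul_le_mul_right (cdf_monotone n hab) _
    have hmono : Antitone fun u => ∫⁻ s, H (x - u - s) ∂m := by
      intro u v huv
      exact lintegral_mono fun s => hmonoH (by linarith)
    exact hmono.measurable
  have hemeas : Measurable fun t : ℝ => P {ω : Ω | (0:ℝ) ≤ x - t} := by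
    have hmono : Antitone fun t : ℝ => P {ω : Ω | (0:ℝ) ≤ x - t} := by
      intro u v huv
      refine measure_mono fun ω hω => ?_
      simp only [mem_setOf_eq] at hω ⊢
      linarith
    exact hmono.measurable
  -- expand both sides of hK x
  have hμside : ∫⁻ t, H (x - t) ∂μ
      = μ (Iic x) + r * ∫⁻ t, ∫⁻ s, H (x - t - s) ∂ν ∂μ := by
    calc ∫⁻ t, H (x - t) ∂μ
        = ∫⁻ t, (P {ω | (0:ℝ) ≤ x - t} + r * ∫⁻ s, H (x - t - s) ∂ν) ∂μ :=
          lintegral_congr fun t => hrecη (x - t)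
      _ = μ (Iic x) + r * ∫⁻ t, ∫⁻ s, H (x - t - s) ∂ν ∂μ := by
          rw [lintegral_add_left hemeas, he μ inferInstance,
            lintegral_const_mul _ (hinner ν)]
  have hνside : ∫⁻ t, H (x - t) ∂ν
      = ν (Iic x) + r * ∫⁻ t, ∫⁻ s, H (x - t - s) ∂μ ∂ν := by
    calc ∫⁻ t, H (x - t) ∂ν
        = ∫⁻ t, (P {ω | (0:ℝ) ≤ x - t} + r * ∫⁻ s, H (x - t - s) ∂μ) ∂ν :=
          lintegral_congr fun t => hrecξ (x - t)
      _ = ν (Iic x) + r * ∫⁻ t, ∫⁻ s, H (x - t - s) ∂μ ∂ν := by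
          rw [lintegral_add_left hemeas, he ν inferInstance,
            lintegral_const_mul _ (hinner μ)]
  have hswap : ∫⁻ t, ∫⁻ s, H (x - t - s) ∂ν ∂μ = ∫⁻ t, ∫⁻ s, H (x - t - s) ∂μ ∂ν := by
    rw [lintegral_lintegral_swap hmeasH2]
    exact lintegral_congr fun t => lintegral_congr fun s => by rw [sub_right_comm]
  have hone : ∀ t : ℝ, ∫⁻ s, H (x - t - s) ∂μ ≤ (1 - r)⁻¹ := by
    intro t
    calc ∫⁻ s, H (x - t - s) ∂μ ≤ ∫⁻ _, (1 - r)⁻¹ ∂μ := lintegral_mono fun s => hHle _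
      _ = (1 - r)⁻¹ := by simp [lintegral_const]
  have hD : ∫⁻ t, ∫⁻ s, H (x - t - s) ∂μ ∂ν ≤ (1 - r)⁻¹ := by
    calc ∫⁻ t, ∫⁻ s, H (x - t - s) ∂μ ∂ν ≤ ∫⁻ _, (1 - r)⁻¹ ∂ν := lintegral_mono hone
      _ = (1 - r)⁻¹ := by simp [lintegral_const]
  have hfin : r * ∫⁻ t, ∫⁻ s, H (x - t - s) ∂μ ∂ν ≠ ∞ :=
    ENNReal.mul_ne_top hrtop (lt_of_le_of_lt hD (lt_top_iff_ne_top.2 hgeom)).ne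
  have hmain : μ (Iic x) + r * ∫⁻ t, ∫⁻ s, H (x - t - s) ∂μ ∂ν
      = ν (Iic x) + r * ∫⁻ t, ∫⁻ s, H (x - t - s) ∂μ ∂ν := by
    have h := (hμside.symm.trans ((hK x).trans hνside))
    rwa [hswap] at h
  exact (ENNReal.add_left_inj hfin).1 hmain
end

section
/- Let ν be a Borel measure on (0,∞) with ∫_0^∞ ν((x,∞)) dx < ∞, let c > 0 and Φ ≥ 0, and define the measure ρ on (0,∞) by ρ(A) := (1/c) ∫_0^∞ e^{−Φu} ν(u + A) du, where u + A := {u + a : a ∈ A}. Then: (i) for every x > 0, ρ((x,∞)) = (1/c) e^{Φx} ∫_x^∞ e^{−Φu} ν((u,∞)) du; (ii) ρ is absolutely continuous with respect to Lebesgue measure with density x ↦ (1/c) ν((x,∞)) − Φ ρ((x,∞)); and (iii) ρ((0,∞)) = (1/c) ∫_0^∞ e^{−Φu} ν((u,∞)) du. -/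
open MeasureTheory Filter Set Topology
open scoped ENNReal

/-- For a Borel measure `ν` on `(0,∞)` with integrable tail, `c > 0`,
`Φ ≥ 0`, and the measure `ρ` on `(0,∞)` defined by
`ρ(A) = (1/c) ∫₀^∞ e^{-Φu} ν(u + A) du`, one has:
(i) `ρ((x,∞)) = (1/c) e^{Φx} ∫ₓ^∞ e^{-Φu} ν((u,∞)) du` for `x > 0`;
(ii) `ρ` is absolutely continuous w.r.t. Lebesgue measure with density
`x ↦ (1/c) ν((x,∞)) - Φ ρ((x,∞))` on `(0,∞)`;
(iii) `ρ((0,∞)) = (1/c) ∫₀^∞ e^{-Φu} ν((u,∞)) du`. -/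
theorem statement18 (ν : Measure ℝ) (hν : ν (Set.Ioi 0)ᶜ = 0)
    (htail : ∫⁻ x in Set.Ioi (0 : ℝ), ν (Set.Ioi x) ≠ ∞)
    (c Φ : ℝ) (hc : 0 < c) (hΦ : 0 ≤ Φ)
    (ρ : Measure ℝ) (hρ0 : ρ (Set.Ioi 0)ᶜ = 0)
    (hρ : ∀ A : Set ℝ, MeasurableSet A → A ⊆ Set.Ioi 0 →
      ρ A = ENNReal.ofReal (1 / c) * ∫⁻ u in Set.Ioi (0 : ℝ),
        ENNReal.ofReal (Real.exp (-(Φ * u))) * ν ((fun a => u + a) '' A)) :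
    (∀ x : ℝ, 0 < x →
      ρ (Set.Ioi x) = ENNReal.ofReal ((1 / c) * Real.exp (Φ * x) *
        ∫ u in Set.Ioi x, Real.exp (-(Φ * u)) * (ν (Set.Ioi u)).toReal)) ∧
    (ρ ≪ volume ∧
      ρ = volume.withDensity (Set.indicator (Set.Ioi 0) fun x =>
        ENNReal.ofReal ((1 / c) * (ν (Set.Ioi x)).toReal - Φ * (ρ (Set.Ioi x)).toReal))) ∧
    ρ (Set.Ioi 0) = ENNReal.ofReal ((1 / c) *
      ∫ u in Set.Ioi (0 : ℝ), Real.exp (-(Φ * u)) * (ν (Set.Ioi u)).toReal) := by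
  have hTanti : Antitone fun x : ℝ => ν (Set.Ioi x) :=
    fun a b hab => measure_mono (Ioi_subset_Ioi hab)
  have hTmeas : Measurable fun x : ℝ => ν (Set.Ioi x) := hTanti.measurable
  -- tail is finite for positive x
  have hTfin : ∀ x : ℝ, 0 < x → ν (Set.Ioi x) ≠ ∞ := by
    intro x hx hcon
    apply htail
    rw [eq_top_iff]
    calc (⊤ : ℝ≥0∞) = ∫⁻ _ in Set.Ioo 0 x, ν (Set.Ioi x) := by
          rw [setLIntegral_const, hcon, ENNReal.top_mul]
          simp [Real.volume_Ioo, hx]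
      _ ≤ ∫⁻ u in Set.Ioo 0 x, ν (Set.Ioi u) :=
          setLIntegral_mono' measurableSet_Ioo fun u hu =>
            measure_mono (Ioi_subset_Ioi hu.2.le)
      _ ≤ ∫⁻ u in Set.Ioi 0, ν (Set.Ioi u) := lintegral_mono_set fun u hu => hu.1
  -- translation invariance of the Lebesgue integral
  have hshift : ∀ f : ℝ → ℝ≥0∞, Measurable f → ∀ x : ℝ,
      ∫⁻ u in Set.Ioi x, f u = ∫⁻ u in Set.Ioi (0 : ℝ), f (u + x) := by
    intro f hf x
    conv_lhs => rw [← map_add_right_eq_self volume x]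
    rw [setLIntegral_map measurableSet_Ioi hf (measurable_add_const x)]
    congr 1
    ext u
    simp [mem_Ioi]
  -- key identity (E)
  have hwmeas : ∀ x : ℝ, Measurable fun v : ℝ =>
      ENNReal.ofReal (Real.exp (Φ * (x - v))) * ν (Set.Ioi v) := by
    intro x
    exact (((measurable_const.sub measurable_id).const_mul Φ).exp.ennreal_ofReal).mul hTmeas
  have keyE : ∀ x : ℝ, 0 ≤ x → ρ (Set.Ioi x) = ENNReal.ofReal (1 / c) *
      ∫⁻ u in Set.Ioi x, ENNReal.ofReal (Real.exp (Φ * (x - u))) * ν (Set.Ioi u) := by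
    intro x hx
    rw [hρ _ measurableSet_Ioi fun y hy => lt_of_le_of_lt hx hy]
    congr 1
    rw [hshift _ (hwmeas x) x]
    apply lintegral_congr
    intro u
    simp only [Set.image_const_add_Ioi]
    congr 3
    ring
  have hIoiFin : ∀ x : ℝ, 0 ≤ x → ∫⁻ u in Set.Ioi x, ν (Set.Ioi u) ≠ ∞ := fun x hx =>
    ne_top_of_le_ne_top htail (lintegral_mono_set (Ioi_subset_Ioi hx))
  -- the weighted tail integral is finite
  have hWfin : ∀ x : ℝ, 0 ≤ x →
      (∫⁻ u in Set.Ioi x, ENNReal.ofReal (Real.exp (Φ * (x - u))) * ν (Set.Ioi u)) ≠ ∞ := by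
    intro x hx
    apply ne_top_of_le_ne_top (hIoiFin x hx)
    apply setLIntegral_mono' measurableSet_Ioi
    intro u hu
    calc ENNReal.ofReal (Real.exp (Φ * (x - u))) * ν (Set.Ioi u)
        ≤ 1 * ν (Set.Ioi u) := by
          gcongr
          rw [show (1 : ℝ≥0∞) = ENNReal.ofReal 1 by simp]
          apply ENNReal.ofReal_le_ofReal
          rw [Real.exp_le_one_iff]
          have : x - u ≤ 0 := by linarith [mem_Ioi.mp hu]
          exact mul_nonpos_of_nonneg_of_nonpos hΦ this
      _ = ν (Set.Ioi u) := one_mul _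
  have hρfin : ∀ x : ℝ, 0 ≤ x → ρ (Set.Ioi x) ≠ ∞ := by
    intro x hx
    rw [keyE x hx]
    exact ENNReal.mul_ne_top ENNReal.ofReal_ne_top (hWfin x hx)
  -- integrability of the real-valued integrands
  have hTint : ∀ x : ℝ, 0 ≤ x →
      IntegrableOn (fun u => (ν (Set.Ioi u)).toReal) (Set.Ioi x) := fun x hx =>
    integrable_toReal_of_lintegral_ne_top hTmeas.aemeasurable (hIoiFin x hx)
  have hInt : ∀ x : ℝ, 0 ≤ x →
      IntegrableOn (fun u => Real.exp (-(Φ * u)) * (ν (Set.Ioi u)).toReal) (Set.Ioi x) := by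
    intro x hx
    apply Integrable.mono' (hTint x hx)
    · exact (((measurable_id.const_mul Φ).neg.exp).mul
        hTmeas.ennreal_toReal).aestronglyMeasurable
    · rw [ae_restrict_iff' measurableSet_Ioi]
      apply Filter.Eventually.of_forall
      intro u hu
      have hu0 : 0 < u := lt_of_le_of_lt hx (mem_Ioi.mp hu)
      rw [norm_mul, Real.norm_eq_abs, abs_of_pos (Real.exp_pos _), Real.norm_eq_abs,
        abs_of_nonneg ENNReal.toReal_nonneg]
      apply mul_le_of_le_one_left ENNReal.toReal_nonneg
      rw [Real.exp_le_one_iff]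
      simp only [neg_nonpos]
      exact mul_nonneg hΦ hu0.le
  -- converting the lintegral to a Bochner integral
  have hconv : ∀ x : ℝ, 0 ≤ x →
      ∫⁻ u in Set.Ioi x, ENNReal.ofReal (Real.exp (-(Φ * u))) * ν (Set.Ioi u)
        = ENNReal.ofReal (∫ u in Set.Ioi x, Real.exp (-(Φ * u)) * (ν (Set.Ioi u)).toReal) := by
    intro x hx
    rw [ofReal_integral_eq_lintegral_ofReal (hInt x hx)
      (Filter.Eventually.of_forall fun u =>
        mul_nonneg (Real.exp_pos _).le ENNReal.toReal_nonneg)]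
    apply setLIntegral_congr_fun measurableSet_Ioi
    intro u hu
    beta_reduce
    rw [ENNReal.ofReal_mul (Real.exp_pos _).le,
      ENNReal.ofReal_toReal (hTfin u (lt_of_le_of_lt hx (mem_Ioi.mp hu)))]
  -- second form of the key identity
  have keyE2 : ∀ x : ℝ, 0 ≤ x → ρ (Set.Ioi x) = ENNReal.ofReal (1 / c) *
      (ENNReal.ofReal (Real.exp (Φ * x)) *
        ∫⁻ u in Set.Ioi x, ENNReal.ofReal (Real.exp (-(Φ * u))) * ν (Set.Ioi u)) := by
    intro x hx
    rw [keyE x hx]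
    congr 1
    rw [← lintegral_const_mul' _ _ ENNReal.ofReal_ne_top]
    apply lintegral_congr
    intro u
    rw [← mul_assoc, ← ENNReal.ofReal_mul (Real.exp_pos _).le, ← Real.exp_add]
    congr 3
    ring
  -- Step A : the pointwise bound  Φ ρ((x,∞)) ≤ (1/c) ν((x,∞))
  have hexp_meas : ∀ x : ℝ, Measurable fun u : ℝ =>
      ENNReal.ofReal (Φ * Real.exp (Φ * (x - u))) :=
    fun x => ((((measurable_const.sub measurable_id).const_mul Φ).exp).const_mul Φ).ennreal_ofReal
  have hexp_meas' : ∀ u : ℝ, Measurable fun x : ℝ =>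
      ENNReal.ofReal (Φ * Real.exp (Φ * (x - u))) :=
    fun u => ((((measurable_id.sub measurable_const).const_mul Φ).exp).const_mul Φ).ennreal_ofReal
  have hbd : ∀ x : ℝ, 0 < x →
      ENNReal.ofReal Φ * ρ (Set.Ioi x) ≤ ENNReal.ofReal (1 / c) * ν (Set.Ioi x) := by
    intro x hx
    rcases eq_or_lt_of_le hΦ with hΦ0 | hΦpos
    · simp [← hΦ0]
    have hJint : IntegrableOn (fun u => Φ * Real.exp (Φ * (x - u))) (Set.Ioi x) := by
      have h1 := (exp_neg_integrableOn_Ioi x hΦpos).const_mul (Φ * Real.exp (Φ * x))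
      apply IntegrableOn.congr_fun h1 _ measurableSet_Ioi
      intro u _
      show Φ * Real.exp (Φ * x) * Real.exp (-Φ * u) = Φ * Real.exp (Φ * (x - u))
      rw [mul_assoc, ← Real.exp_add]
      congr 2
      ring
    have hJ : ∫⁻ u in Set.Ioi x, ENNReal.ofReal (Φ * Real.exp (Φ * (x - u))) = 1 := by
      rw [← ofReal_integral_eq_lintegral_ofReal hJint
        (Filter.Eventually.of_forall fun u => mul_nonneg hΦ (Real.exp_pos _).le)]
      have hval : ∫ u in Set.Ioi x, Φ * Real.exp (Φ * (x - u)) = 1 := by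
        have h2 : ∫ u in Set.Ioi x, Φ * Real.exp (Φ * (x - u))
            = ∫ u in Set.Ioi x, (Φ * Real.exp (Φ * x)) * Real.exp (-(Φ * u)) := by
          apply setIntegral_congr_fun measurableSet_Ioi
          intro u _
          show Φ * Real.exp (Φ * (x - u)) = Φ * Real.exp (Φ * x) * Real.exp (-(Φ * u))
          rw [mul_assoc, ← Real.exp_add]
          congr 2
          ring
        rw [h2, MeasureTheory.integral_const_mul]
        have h3 : ∫ u in Set.Ioi x, Real.exp (-(Φ * u))
            = Φ⁻¹ * Real.exp (-(Φ * x)) := by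
          have h4 := integral_comp_mul_left_Ioi (fun t => Real.exp (-t)) x hΦpos
          simp only [smul_eq_mul] at h4
          rw [show (fun u : ℝ => Real.exp (-(Φ * u))) = fun u : ℝ => Real.exp (-(Φ * u)) from rfl]
          calc ∫ u in Set.Ioi x, Real.exp (-(Φ * u)) = Φ⁻¹ * ∫ t in Set.Ioi (Φ * x), Real.exp (-t) := h4
            _ = Φ⁻¹ * Real.exp (-(Φ * x)) := by rw [integral_exp_neg_Ioi]
        have he : Real.exp (Φ * x) * Real.exp (-(Φ * x)) = 1 := by
          rw [← Real.exp_add, add_neg_cancel, Real.exp_zero]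
        rw [h3, show Φ * Real.exp (Φ * x) * (Φ⁻¹ * Real.exp (-(Φ * x)))
            = Φ * Φ⁻¹ * (Real.exp (Φ * x) * Real.exp (-(Φ * x))) from by ring,
          he, mul_one, mul_inv_cancel₀ hΦpos.ne']
      rw [hval, ENNReal.ofReal_one]
    calc ENNReal.ofReal Φ * ρ (Set.Ioi x)
        = ENNReal.ofReal (1 / c) *
            ∫⁻ u in Set.Ioi x, ENNReal.ofReal (Φ * Real.exp (Φ * (x - u))) * ν (Set.Ioi u) := by
          rw [keyE x hx.le, ← mul_assoc, mul_comm (ENNReal.ofReal Φ), mul_assoc,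
            ← lintegral_const_mul' _ _ ENNReal.ofReal_ne_top]
          congr 1
          apply lintegral_congr
          intro u
          rw [← mul_assoc, ← ENNReal.ofReal_mul hΦ]
      _ ≤ ENNReal.ofReal (1 / c) *
            ∫⁻ u in Set.Ioi x, ENNReal.ofReal (Φ * Real.exp (Φ * (x - u))) * ν (Set.Ioi x) := by
          exact mul_le_mul_right (setLIntegral_mono' measurableSet_Ioi fun u hu =>
            mul_le_mul_right (measure_mono (Ioi_subset_Ioi (mem_Ioi.mp hu).le)) _) _
      _ = ENNReal.ofReal (1 / c) * ν (Set.Ioi x) := by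
          rw [lintegral_mul_const _ (hexp_meas x), hJ, one_mul]
  -- isolate the first step of hbd for reuse
  have hΦρ : ∀ x : ℝ, 0 ≤ x → ENNReal.ofReal Φ * ρ (Set.Ioi x)
      = ENNReal.ofReal (1 / c) *
          ∫⁻ u in Set.Ioi x, ENNReal.ofReal (Φ * Real.exp (Φ * (x - u))) * ν (Set.Ioi u) := by
    intro x hx
    rw [keyE x hx, ← mul_assoc, mul_comm (ENNReal.ofReal Φ), mul_assoc,
      ← lintegral_const_mul' _ _ ENNReal.ofReal_ne_top]
    congr 1
    apply lintegral_congr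
    intro u
    rw [← mul_assoc, ← ENNReal.ofReal_mul hΦ]
  -- the inner interval integral
  have hinner : ∀ y u : ℝ, y < u →
      ∫⁻ x in Set.Ioo y u, ENNReal.ofReal (Φ * Real.exp (Φ * (x - u)))
        = ENNReal.ofReal (1 - Real.exp (Φ * (y - u))) := by
    intro y u hu
    have hcont : Continuous fun x : ℝ => Φ * Real.exp (Φ * (x - u)) := by fun_prop
    have hIoo : IntegrableOn (fun x => Φ * Real.exp (Φ * (x - u))) (Set.Ioo y u) :=
      (hcont.integrableOn_Icc).mono_set Set.Ioo_subset_Icc_self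
    rw [← ofReal_integral_eq_lintegral_ofReal hIoo
      (Filter.Eventually.of_forall fun x => mul_nonneg hΦ (Real.exp_pos _).le)]
    congr 1
    have hd : ∀ x ∈ Set.uIcc y u, HasDerivAt (fun x => Real.exp (Φ * (x - u)))
        (Φ * Real.exp (Φ * (x - u))) x := by
      intro x _
      have h1 : HasDerivAt (fun x : ℝ => Φ * (x - u)) (Φ * 1) x :=
        ((hasDerivAt_id x).sub_const u).const_mul Φ
      have := (Real.hasDerivAt_exp (Φ * (x - u))).comp x h1
      exact this.congr_deriv (by ring)
    rw [← integral_Ioc_eq_integral_Ioo, ← intervalIntegral.integral_of_le hu.le,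
      intervalIntegral.integral_eq_sub_of_hasDerivAt hd (hcont.intervalIntegrable y u)]
    simp
  -- the product-space function
  set G : ℝ × ℝ → ℝ≥0∞ := fun p =>
    ENNReal.ofReal (Φ * Real.exp (Φ * (p.1 - p.2))) * ν (Set.Ioi p.2) with hGdef
  have hGmeas : Measurable G :=
    ((((measurable_fst.sub measurable_snd).const_mul Φ).exp.const_mul Φ).ennreal_ofReal).mul
      (hTmeas.comp measurable_snd)
  set F : ℝ × ℝ → ℝ≥0∞ := fun p => Set.indicator {q : ℝ × ℝ | q.1 < q.2} G p with hFdef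
  have hFmeas : Measurable F :=
    hGmeas.indicator (measurableSet_lt measurable_fst measurable_snd)
  -- Step B : the Fubini identity
  have hB : ∀ y : ℝ, 0 ≤ y →
      ENNReal.ofReal Φ * ∫⁻ x in Set.Ioi y, ρ (Set.Ioi x)
        = (ENNReal.ofReal (1 / c) * ∫⁻ u in Set.Ioi y, ν (Set.Ioi u)) - ρ (Set.Ioi y) := by
    intro y hy
    have step1 : ∀ x : ℝ, y < x → ENNReal.ofReal Φ * ρ (Set.Ioi x)
        = ENNReal.ofReal (1 / c) * ∫⁻ u in Set.Ioi y, F (x, u) := by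
      intro x hx
      rw [hΦρ x (le_of_lt (lt_of_le_of_lt hy hx))]
      congr 1
      have hFind : ∀ u : ℝ, F (x, u)
          = Set.indicator (Set.Ioi x) (fun u => G (x, u)) u := by
        intro u
        by_cases h : x < u <;>
          simp [hFdef, Set.indicator, h, Set.mem_Ioi, Set.mem_setOf_eq]
      rw [lintegral_congr hFind, setLIntegral_indicator measurableSet_Ioi,
        Set.inter_eq_self_of_subset_left (Ioi_subset_Ioi hx.le)]
    calc ENNReal.ofReal Φ * ∫⁻ x in Set.Ioi y, ρ (Set.Ioi x)
        = ∫⁻ x in Set.Ioi y, ENNReal.ofReal Φ * ρ (Set.Ioi x) :=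
          (lintegral_const_mul' _ _ ENNReal.ofReal_ne_top).symm
      _ = ∫⁻ x in Set.Ioi y, ENNReal.ofReal (1 / c) * ∫⁻ u in Set.Ioi y, F (x, u) :=
          setLIntegral_congr_fun measurableSet_Ioi
            (fun x hx => step1 x (mem_Ioi.mp hx))
      _ = ENNReal.ofReal (1 / c) * ∫⁻ x in Set.Ioi y, ∫⁻ u in Set.Ioi y, F (x, u) :=
          lintegral_const_mul' _ _ ENNReal.ofReal_ne_top
      _ = ENNReal.ofReal (1 / c) * ∫⁻ u in Set.Ioi y, ∫⁻ x in Set.Ioi y, F (x, u) := by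
          rw [lintegral_lintegral_swap hFmeas.aemeasurable]
      _ = ENNReal.ofReal (1 / c) * ∫⁻ u in Set.Ioi y,
            (ν (Set.Ioi u) - ENNReal.ofReal (Real.exp (Φ * (y - u))) * ν (Set.Ioi u)) := by
          congr 1
          apply setLIntegral_congr_fun measurableSet_Ioi
          intro u hu
          beta_reduce
          have hu' : y < u := mem_Ioi.mp hu
          have hFind : ∀ x : ℝ, F (x, u)
              = Set.indicator (Set.Iio u) (fun x => G (x, u)) x := by
            intro x
            by_cases h : x < u <;>
              simp [hFdef, Set.indicator, h, Set.mem_Iio, Set.mem_setOf_eq]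
          rw [lintegral_congr hFind, setLIntegral_indicator measurableSet_Iio,
            Set.inter_comm, Set.Ioi_inter_Iio]
          rw [show (fun x => G (x, u))
              = fun x => ENNReal.ofReal (Φ * Real.exp (Φ * (x - u))) * ν (Set.Ioi u) from rfl]
          rw [lintegral_mul_const _ (hexp_meas' u), hinner y u hu',
            ENNReal.ofReal_sub _ (Real.exp_pos _).le, ENNReal.ofReal_one,
            ENNReal.sub_mul fun _ _ => hTfin u (lt_of_le_of_lt hy hu'), one_mul]
      _ = ENNReal.ofReal (1 / c) * ((∫⁻ u in Set.Ioi y, ν (Set.Ioi u))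
            - ∫⁻ u in Set.Ioi y, ENNReal.ofReal (Real.exp (Φ * (y - u))) * ν (Set.Ioi u)) := by
          congr 1
          apply lintegral_sub (hwmeas y) (hWfin y hy)
          apply (ae_restrict_iff' measurableSet_Ioi).mpr
          apply Filter.Eventually.of_forall
          intro u hu
          calc ENNReal.ofReal (Real.exp (Φ * (y - u))) * ν (Set.Ioi u)
              ≤ 1 * ν (Set.Ioi u) := by
                apply mul_le_mul_left
                rw [show (1 : ℝ≥0∞) = ENNReal.ofReal 1 by simp]
                apply ENNReal.ofReal_le_ofReal
                rw [Real.exp_le_one_iff]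
                have : y - u ≤ 0 := by linarith [mem_Ioi.mp hu]
                exact mul_nonpos_of_nonneg_of_nonpos hΦ this
            _ = ν (Set.Ioi u) := one_mul _
      _ = (ENNReal.ofReal (1 / c) * ∫⁻ u in Set.Ioi y, ν (Set.Ioi u)) - ρ (Set.Ioi y) := by
          rw [ENNReal.mul_sub fun _ _ => ENNReal.ofReal_ne_top, ← keyE y hy]
  -- measurability of the density
  have hρanti : Antitone fun x : ℝ => ρ (Set.Ioi x) :=
    fun a b hab => measure_mono (Ioi_subset_Ioi hab)
  have hρmeasf : Measurable fun x : ℝ => ρ (Set.Ioi x) := hρanti.measurable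
  set g : ℝ → ℝ≥0∞ := fun x =>
    ENNReal.ofReal ((1 / c) * (ν (Set.Ioi x)).toReal - Φ * (ρ (Set.Ioi x)).toReal) with hgdef
  have hgmeas : Measurable g :=
    ((hTmeas.ennreal_toReal.const_mul (1 / c)).sub
      (hρmeasf.ennreal_toReal.const_mul Φ)).ennreal_ofReal
  -- Step C : the density integrates back to ρ on right-tails
  have hC : ∀ y : ℝ, 0 ≤ y → ∫⁻ x in Set.Ioi y, g x = ρ (Set.Ioi y) := by
    intro y hy
    have hfin2 : ∫⁻ x in Set.Ioi y, ENNReal.ofReal Φ * ρ (Set.Ioi x) ≠ ∞ := by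
      rw [lintegral_const_mul' _ _ ENNReal.ofReal_ne_top, hB y hy]
      exact ne_top_of_le_ne_top
        (ENNReal.mul_ne_top ENNReal.ofReal_ne_top (hIoiFin y hy)) tsub_le_self
    have heq : ∀ x ∈ Set.Ioi y, g x
        = ENNReal.ofReal (1 / c) * ν (Set.Ioi x) - ENNReal.ofReal Φ * ρ (Set.Ioi x) := by
      intro x hx
      have hx0 : 0 < x := lt_of_le_of_lt hy (mem_Ioi.mp hx)
      rw [hgdef]
      simp only
      rw [ENNReal.ofReal_sub _ (mul_nonneg hΦ ENNReal.toReal_nonneg),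
        ENNReal.ofReal_mul (by positivity : (0:ℝ) ≤ 1 / c), ENNReal.ofReal_mul hΦ,
        ENNReal.ofReal_toReal (hTfin x hx0), ENNReal.ofReal_toReal (hρfin x hx0.le)]
    rw [setLIntegral_congr_fun measurableSet_Ioi heq,
      lintegral_sub (hρmeasf.const_mul _) hfin2
        ((ae_restrict_iff' measurableSet_Ioi).mpr (Filter.Eventually.of_forall fun x hx =>
          hbd x (lt_of_le_of_lt hy (mem_Ioi.mp hx)))),
      lintegral_const_mul' _ _ ENNReal.ofReal_ne_top,
      lintegral_const_mul' _ _ ENNReal.ofReal_ne_top, hB y hy]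
    apply ENNReal.sub_sub_cancel
      (ENNReal.mul_ne_top ENNReal.ofReal_ne_top (hIoiFin y hy))
    rw [keyE y hy]
    apply mul_le_mul_right
    apply setLIntegral_mono' measurableSet_Ioi
    intro u hu
    calc ENNReal.ofReal (Real.exp (Φ * (y - u))) * ν (Set.Ioi u)
        ≤ 1 * ν (Set.Ioi u) := by
          apply mul_le_mul_left
          rw [show (1 : ℝ≥0∞) = ENNReal.ofReal 1 by simp]
          apply ENNReal.ofReal_le_ofReal
          rw [Real.exp_le_one_iff]
          have : y - u ≤ 0 := by linarith [mem_Ioi.mp hu]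
          exact mul_nonpos_of_nonneg_of_nonpos hΦ this
      _ = ν (Set.Ioi u) := one_mul _
  -- ρ charges only (0,∞)
  have hρouter : ∀ a : ℝ, ρ (Set.Ioi a) = ρ (Set.Ioi (max a 0)) := by
    intro a
    apply le_antisymm
    · calc ρ (Set.Ioi a) ≤ ρ (Set.Ioi (max a 0) ∪ (Set.Ioi 0)ᶜ) := by
            apply measure_mono
            intro x hx
            by_cases h : 0 < x
            · exact Or.inl (by simp [mem_Ioi] at hx ⊢; exact ⟨hx, h⟩)
            · exact Or.inr (by simpa [mem_Ioi] using h)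
        _ ≤ ρ (Set.Ioi (max a 0)) + ρ ((Set.Ioi 0)ᶜ) := measure_union_le _ _
        _ = ρ (Set.Ioi (max a 0)) := by rw [hρ0, add_zero]
    · exact measure_mono (Ioi_subset_Ioi (le_max_left a 0))
  have hρuniv : ρ Set.univ = ρ (Set.Ioi 0) := by
    apply le_antisymm
    · calc ρ Set.univ = ρ (Set.Ioi 0 ∪ (Set.Ioi 0)ᶜ) := by rw [Set.union_compl_self]
        _ ≤ ρ (Set.Ioi 0) + ρ ((Set.Ioi 0)ᶜ) := measure_union_le _ _
        _ = ρ (Set.Ioi 0) := by rw [hρ0, add_zero]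
    · exact measure_mono (Set.subset_univ _)
  haveI : IsFiniteMeasure ρ := ⟨by rw [hρuniv]; exact (hρfin 0 le_rfl).lt_top⟩
  -- the withDensity measure agrees with ρ on right-tails
  have hμ'Ioi : ∀ a : ℝ,
      volume.withDensity (Set.indicator (Set.Ioi 0) g) (Set.Ioi a) = ρ (Set.Ioi a) := by
    intro a
    rw [withDensity_apply _ measurableSet_Ioi, setLIntegral_indicator measurableSet_Ioi,
      show Set.Ioi (0:ℝ) ∩ Set.Ioi a = Set.Ioi (max a 0) from by
        rw [Set.Ioi_inter_Ioi, max_comm],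
      hC (max a 0) (le_max_right a 0), ← hρouter a]
  -- the measures agree
  have hmain : ρ = volume.withDensity (Set.indicator (Set.Ioi 0) g) := by
    apply MeasureTheory.Measure.ext_of_Ioc_finite ρ _ ?_ ?_
    · rw [withDensity_apply _ MeasurableSet.univ, Measure.restrict_univ,
        lintegral_indicator measurableSet_Ioi, hC 0 le_rfl, hρuniv]
    · intro a b hab
      rw [← Set.Ioi_diff_Ioi,
        measure_diff (Ioi_subset_Ioi hab.le) measurableSet_Ioi.nullMeasurableSet
          (measure_ne_top ρ _),
        measure_diff (Ioi_subset_Ioi hab.le) measurableSet_Ioi.nullMeasurableSet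
          (by rw [hμ'Ioi b]; exact measure_ne_top ρ _),
        hμ'Ioi a, hμ'Ioi b]
  refine ⟨?_, ⟨hmain ▸ withDensity_absolutelyContinuous volume _, hmain⟩, ?_⟩
  · intro x hx
    rw [keyE2 x hx.le, hconv x hx.le,
      ENNReal.ofReal_mul (by positivity : (0:ℝ) ≤ 1 / c * Real.exp (Φ * x)),
      ENNReal.ofReal_mul (by positivity : (0:ℝ) ≤ 1 / c), mul_assoc]
  · rw [keyE2 0 le_rfl, hconv 0 le_rfl, mul_zero, Real.exp_zero, ENNReal.ofReal_one, one_mul,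
      ← ENNReal.ofReal_mul (by positivity : (0:ℝ) ≤ 1 / c)]
end

section
/- Let V : (0,1] → (0,∞) be a non-decreasing function with lim_{x→0+} V(x)/x = +∞. Then there exists a Borel measure ν on (0,1) such that ∫_{(0,1)} x ν(dx) < ∞ and ∫_{(0,1)} V(x) ν(dx) = ∞. (In particular, ν is the Lévy measure of a driftless subordinator, and the integral criterion ∫_0^1 V(x) ν(dx) < ∞ fails for ν.) -/
open MeasureTheory Filter Set Topology
open scoped ENNReal

/-- If `V : (0,1] → (0,∞)` is non-decreasing with `V(x)/x → ∞` as
`x → 0+`, then there is a Borel measure `ν` on `(0,1)` with `∫ x ν(dx) < ∞` but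
`∫ V(x) ν(dx) = ∞`. -/
theorem statement19 (V : ℝ → ℝ)
    (hVpos : ∀ x ∈ Set.Ioc (0 : ℝ) 1, 0 < V x)
    (hVmono : MonotoneOn V (Set.Ioc (0 : ℝ) 1))
    (hVlim : Tendsto (fun x => V x / x) (nhdsWithin 0 (Set.Ioi 0)) atTop) :
    ∃ ν : Measure ℝ, ν (Set.Ioo (0 : ℝ) 1)ᶜ = 0 ∧
      (∫⁻ x in Set.Ioo (0 : ℝ) 1, ENNReal.ofReal x ∂ν) ≠ ∞ ∧
      (∫⁻ x in Set.Ioo (0 : ℝ) 1, ENNReal.ofReal (V x) ∂ν) = ∞ := by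
  classical
  -- choose points xₙ ∈ (0,1) with V(xₙ)/xₙ ≥ 2ⁿ
  have hx : ∀ n : ℕ, ∃ y, y ∈ Set.Ioo (0:ℝ) 1 ∧ (2:ℝ)^n ≤ V y / y := by
    intro n
    have h1 : ∀ᶠ y in 𝓝[>] (0:ℝ), (2:ℝ)^n ≤ V y / y :=
      hVlim.eventually (eventually_ge_atTop _)
    have h2 : Set.Ioo (0:ℝ) 1 ∈ 𝓝[>] (0:ℝ) :=
      Ioo_mem_nhdsGT_of_mem (by constructor <;> norm_num)
    have := (h1.and (eventually_mem_set.2 h2)).exists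
    obtain ⟨y, hy1, hy2⟩ := this
    exact ⟨y, hy2, hy1⟩
  choose x hxmem hxV using hx
  have hx0 : ∀ n, 0 < x n := fun n => (hxmem n).1
  have hx1 : ∀ n, x n < 1 := fun n => (hxmem n).2
  have hVx : ∀ n, 0 < V (x n) := fun n => hVpos _ ⟨hx0 n, (hx1 n).le⟩
  have hkey : ∀ n, x n / V (x n) ≤ (1/2:ℝ)^n := by
    intro n
    rw [div_le_iff₀ (hVx n)]
    have h := (le_div_iff₀ (hx0 n)).1 (hxV n)
    calc x n = (1/2:ℝ)^n * ((2:ℝ)^n * x n) := by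
            rw [← mul_assoc, ← mul_pow]; norm_num
      _ ≤ (1/2:ℝ)^n * V (x n) := by
            apply mul_le_mul_of_nonneg_left h (by positivity)

  set ν : Measure ℝ :=
    Measure.sum (fun n : ℕ => (ENNReal.ofReal (1 / V (x n))) • Measure.dirac (x n)) with hν
  have hmeas : MeasurableSet (Set.Ioo (0:ℝ) 1) := measurableSet_Ioo
  have hres : ν.restrict (Set.Ioo (0:ℝ) 1) = ν := by
    rw [hν, Measure.restrict_sum _ hmeas]
    congr 1
    ext n : 1
    rw [Measure.restrict_smul, MeasureTheory.restrict_dirac' hmeas, if_pos (hxmem n)]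
  have hlint : ∀ f : ℝ → ℝ≥0∞,
      (∫⁻ y in Set.Ioo (0:ℝ) 1, f y ∂ν) =
        ∑' n : ℕ, ENNReal.ofReal (1 / V (x n)) * f (x n) := by
    intro f
    rw [hres, hν, lintegral_sum_measure]
    congr 1
    ext n : 1
    rw [lintegral_smul_measure, lintegral_dirac, smul_eq_mul]
  refine ⟨ν, ?_, ?_, ?_⟩
  · rw [hν, Measure.sum_apply _ hmeas.compl]
    simp only [Measure.smul_apply, Measure.dirac_apply' _ hmeas.compl]
    have : ∀ n : ℕ, (Set.Ioo (0:ℝ) 1)ᶜ.indicator (1 : ℝ → ℝ≥0∞) (x n) = 0 := by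
      intro n
      simp [Set.indicator_of_notMem, hxmem n]
    simp [this]
  · rw [hlint]
    have hle : ∀ n : ℕ, ENNReal.ofReal (1 / V (x n)) * ENNReal.ofReal (x n)
        ≤ (ENNReal.ofReal (1/2))^n := by
      intro n
      rw [← ENNReal.ofReal_mul (one_div_pos.2 (hVx n)).le, ← ENNReal.ofReal_pow (by norm_num)]
      apply ENNReal.ofReal_le_ofReal
      rw [one_div, inv_mul_eq_div]
      exact hkey n
    have : (∑' n : ℕ, ENNReal.ofReal (1 / V (x n)) * ENNReal.ofReal (x n))
        ≤ ∑' n : ℕ, (ENNReal.ofReal (1/2))^n := ENNReal.tsum_le_tsum hle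
    refine ne_top_of_le_ne_top ?_ this
    have h2 : ENNReal.ofReal (1/2) = 2⁻¹ := by
      rw [one_div, ENNReal.ofReal_inv_of_pos (by norm_num), ENNReal.ofReal_ofNat]
    rw [h2, ENNReal.tsum_geometric, ENNReal.one_sub_inv_two]
    simp
  · rw [hlint]
    have : ∀ n : ℕ, ENNReal.ofReal (1 / V (x n)) * ENNReal.ofReal (V (x n)) = 1 := by
      intro n
      rw [← ENNReal.ofReal_mul (one_div_pos.2 (hVx n)).le, one_div,
        inv_mul_cancel₀ (hVx n).ne', ENNReal.ofReal_one]
    simp only [this]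
    exact ENNReal.tsum_const_eq_top_of_ne_zero one_ne_zero
end
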